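/- arXiv:2309.14347 — 7 statements merged into one kernel-verified Lean document; each statement's English description precedes it below -/
import Mathlib

section
/- Let t₀ ≤ t₁ be real numbers, let K ≥ 0, and let α : ℝ → ℝ be monotone, Lipschitz with constant K, and satisfy α(0) = 0. Let β : ℝ → ℝ be continuous on [t₀, t₁], differentiable at every point of [t₀, t₁], and suppose β′(t) ≥ -α(β(t)) for all t ∈ [t₀, t₁]. If β(t₀) ≥ 0, then β(t) ≥ 0 for all t ∈ [t₀, t₁]. -/
/-! Where `β < 0`, monotonicity of `α` and `α 0 = 0` give `β' ≥ -α β ≥ 0`, so `β` cannot cross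
below `0`. To make this rigorous, fence `-β` by the barriers `ε (1 + (t - t₀))`: their slope `ε`
is strictly larger than `-β'` at any contact point, and letting `ε → 0` gives `-β ≤ 0`. -/

open Set Filter Topology

theorem image_nonneg_of_deriv_right_nonneg_of_neg {f f' : ℝ → ℝ} {a b : ℝ}
    (hf : ContinuousOn f (Icc a b)) (hf' : ∀ x ∈ Ico a b, HasDerivWithinAt f (f' x) (Ici x) x)
    (ha : 0 ≤ f a) (hneg : ∀ x ∈ Ico a b, f x < 0 → 0 ≤ f' x) :
    ∀ ⦃x⦄, x ∈ Icc a b → 0 ≤ f x := by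
  intro x hx
  have fenced : ∀ ε > 0, -f x ≤ ε * (1 + (x - a)) := by
    intro ε hε
    refine image_le_of_deriv_right_lt_deriv_boundary' (f := fun y => -f y) (f' := fun y => -f' y)
      (B := fun y => ε * (1 + (y - a))) (B' := fun _ => ε) hf.neg (fun y hy => (hf' y hy).neg)
      (by simp only [sub_self, add_zero, mul_one]; linarith) (by fun_prop) (fun y _ => ?_) ?_ hx
    · simpa using ((hasDerivAt_id y).sub_const a).const_add 1 |>.const_mul ε |>.hasDerivWithinAt
    · intro y hy hcontact
      have hfy : f y < 0 := by nlinarith [hy.1]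
      linarith [hneg y hy hfy]
  have hlim : Tendsto (fun ε : ℝ => ε * (1 + (x - a))) (𝓝[>] 0) (𝓝 0) := by
    have := (tendsto_id (x := 𝓝 (0 : ℝ))).mul_const (1 + (x - a))
    simpa using this.mono_left nhdsWithin_le_nhds
  have hneg_f_nonpos : -f x ≤ 0 := ge_of_tendsto hlim (eventually_nhdsWithin_of_forall fenced)
  linarith

theorem cbf_forward_invariance_general
    (t₀ t₁ : ℝ)
    (α : ℝ → ℝ) (hmono : Monotone α)
    (hα0 : α 0 = 0)
    (β : ℝ → ℝ)
    (hdiff : ∀ t ∈ Set.Icc t₀ t₁, DifferentiableAt ℝ β t)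
    (hineq : ∀ t ∈ Set.Icc t₀ t₁, deriv β t ≥ -α (β t))
    (h0 : β t₀ ≥ 0) :
    ∀ t ∈ Set.Icc t₀ t₁, β t ≥ 0 := by
  refine fun t ht => image_nonneg_of_deriv_right_nonneg_of_neg
    (fun s hs => (hdiff s hs).continuousAt.continuousWithinAt)
    (fun s hs => (hdiff s (Ico_subset_Icc_self hs)).hasDerivAt.hasDerivWithinAt) h0 ?_ ht
  intro s hs hβs
  have hα_nonpos : α (β s) ≤ 0 := hα0 ▸ hmono hβs.le
  linarith [hineq s (Ico_subset_Icc_self hs)]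

/-- Forward-invariance (comparison lemma) for a scalar control barrier function:
if `β' t ≥ -α (β t)` on `[t₀, t₁]` with `α` a Lipschitz, monotone function vanishing
at `0`, and `β t₀ ≥ 0`, then `β t ≥ 0` on `[t₀, t₁]`. -/
theorem cbf_forward_invariance
    (t₀ t₁ : ℝ) (ht : t₀ ≤ t₁) (K : ℝ) (hK : 0 ≤ K)
    (α : ℝ → ℝ) (hmono : Monotone α) (hlip : LipschitzWith K.toNNReal α)
    (hα0 : α 0 = 0)
    (β : ℝ → ℝ) (hcont : ContinuousOn β (Set.Icc t₀ t₁))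
    (hdiff : ∀ t ∈ Set.Icc t₀ t₁, DifferentiableAt ℝ β t)
    (hineq : ∀ t ∈ Set.Icc t₀ t₁, deriv β t ≥ -α (β t))
    (h0 : β t₀ ≥ 0) :
    ∀ t ∈ Set.Icc t₀ t₁, β t ≥ 0 :=
  cbf_forward_invariance_general t₀ t₁ α hmono hα0 β hdiff hineq h0
end

section
/- Let N ∈ ℕ and let ℓ, r : Fin (N+1) → ℝ and β : Fin (N+1) → ℝ → ℝ. Assume: (i) for every i < N, ℓ(i) ≤ ℓ(i+1), ℓ(i+1) ≤ r(i), and r(i) ≤ r(i+1); (ii) β(0)(ℓ(0)) ≥ 0; (iii) for every i, if β(i)(ℓ(i)) ≥ 0 then β(i)(t) ≥ 0 for all t ∈ [ℓ(i), r(i)]; (iv) for every i < N, if β(i)(ℓ(i+1)) ≥ 0 then β(i+1)(ℓ(i+1)) ≥ 0. Then for every i and every t ∈ [ℓ(i), r(i)], β(i)(t) ≥ 0. Moreover, if additionally for each i there are reals sᵢ, eᵢ with ℓ(i) ≤ sᵢ, eᵢ ≤ r(i), and a function hᵢ : ℝ → ℝ with β(i)(t) ≤ hᵢ(t) for all t ∈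 [sᵢ, eᵢ], then hᵢ(t) ≥ 0 for all t ∈ [sᵢ, eᵢ]. -/
/-! Forward invariance on each time domain spreads nonnegativity from `ℓ i` over `[ℓ i, r i]`;
since `ℓ (i+1)` lies in that domain, the chaining condition hands nonnegativity on to the next
fragment, so by induction every `β i` is nonnegative on its whole domain. The value functions
dominate the `β i` on the coding intervals, which sit inside the domains. -/

open Set

section ChainedInvariance

variable {α : Type*} [Preorder α] {N : ℕ} {ℓ r : Fin (N + 1) → α} {β : Fin (N + 1) → α → ℝ}

theorem nonneg_at_left_of_chain
    (hstep : ∀ i : Fin N, ℓ i.succ ∈ Icc (ℓ i.castSucc) (r i.castSucc))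
    (hinit : 0 ≤ β 0 (ℓ 0))
    (hinv : ∀ i, 0 ≤ β i (ℓ i) → ∀ t ∈ Icc (ℓ i) (r i), 0 ≤ β i t)
    (hchain : ∀ i : Fin N, 0 ≤ β i.castSucc (ℓ i.succ) → 0 ≤ β i.succ (ℓ i.succ))
    (i : Fin (N + 1)) : 0 ≤ β i (ℓ i) := by
  induction i using Fin.induction with
  | zero => exact hinit
  | succ j ih => exact hchain j (hinv j.castSucc ih _ (hstep j))

theorem nonneg_on_Icc_of_chain
    (hstep : ∀ i : Fin N, ℓ i.succ ∈ Icc (ℓ i.castSucc) (r i.castSucc))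
    (hinit : 0 ≤ β 0 (ℓ 0))
    (hinv : ∀ i, 0 ≤ β i (ℓ i) → ∀ t ∈ Icc (ℓ i) (r i), 0 ≤ β i t)
    (hchain : ∀ i : Fin N, 0 ≤ β i.castSucc (ℓ i.succ) → 0 ≤ β i.succ (ℓ i.succ))
    (i : Fin (N + 1)) : ∀ t ∈ Icc (ℓ i) (r i), 0 ≤ β i t :=
  hinv i (nonneg_at_left_of_chain hstep hinit hinv hchain i)

end ChainedInvariance

/-- Core of Proposition 1: chained forward invariance along a sequence of CBFs with
interlaced time domains, plus the conclusion that the value functions of the set nodes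
are nonnegative on the coded time intervals. -/
theorem sTLT_complete_path_satisfaction
    (N : ℕ) (ℓ r : Fin (N + 1) → ℝ) (β : Fin (N + 1) → ℝ → ℝ)
    (hinter : ∀ i : Fin N, ℓ i.castSucc ≤ ℓ i.succ ∧ ℓ i.succ ≤ r i.castSucc ∧
      r i.castSucc ≤ r i.succ)
    (hinit : β 0 (ℓ 0) ≥ 0)
    (hinv : ∀ i : Fin (N + 1), β i (ℓ i) ≥ 0 → ∀ t ∈ Set.Icc (ℓ i) (r i), β i t ≥ 0)
    (hchain : ∀ i : Fin N, β i.castSucc (ℓ i.succ) ≥ 0 → β i.succ (ℓ i.succ) ≥ 0)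
    (s e : Fin (N + 1) → ℝ) (h : Fin (N + 1) → ℝ → ℝ)
    (hs : ∀ i, ℓ i ≤ s i) (he : ∀ i, e i ≤ r i)
    (hle : ∀ i, ∀ t ∈ Set.Icc (s i) (e i), β i t ≤ h i t) :
    (∀ i : Fin (N + 1), ∀ t ∈ Set.Icc (ℓ i) (r i), β i t ≥ 0) ∧
    (∀ i : Fin (N + 1), ∀ t ∈ Set.Icc (s i) (e i), h i t ≥ 0) := by
  have hβ := nonneg_on_Icc_of_chain (fun i => ⟨(hinter i).1, (hinter i).2.1⟩) hinit hinv hchain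
  refine ⟨hβ, fun i t ht => ?_⟩
  have hdom : Icc (s i) (e i) ⊆ Icc (ℓ i) (r i) := Icc_subset_Icc (hs i) (he i)
  exact (hβ i t (hdom ht)).trans (hle i t ht)
end

section
/- Let E be the Euclidean plane ℝ² with its Euclidean norm, let S ⊆ E, let x₀ ∈ E, and let 0 ≤ a₁ ≤ b₁ and 0 ≤ a₂ ≤ b₂ be reals. Define Q := {y ∈ E : ∃ z : ℝ → E, z is 1-Lipschitz, z(0) = y, and z(s) ∈ S for all s ∈ [a₂, b₂]}. Then the following are equivalent: (1) there exists a 1-Lipschitz curve x : ℝ → E with x(0) = x₀ and some t′ ∈ [a₁, b₁] such that x(s) ∈ S for all s ∈ [t′ + a₂, t′ + b₂]; (2) there exists a 1-Lipschitz curve x : ℝ → E with x(0) = x₀ and some t′ ∈ [a₁, b₁] such that x(t′) ∈ Q. -/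
lemma glue_lipschitz {E : Type*} [PseudoMetricSpace E]
    (x z : ℝ → E) (hx : LipschitzWith 1 x) (hz : LipschitzWith 1 z)
    (t' : ℝ) (h : x t' = z 0) :
    LipschitzWith 1 (fun s => if s ≤ t' then x s else z (s - t')) := by
  rw [lipschitzWith_iff_dist_le_mul]
  have hx' := lipschitzWith_iff_dist_le_mul.mp hx
  have hz' := lipschitzWith_iff_dist_le_mul.mp hz
  have key : ∀ s u : ℝ, s ≤ u →
      dist (if s ≤ t' then x s else z (s - t')) (if u ≤ t' then x u else z (u - t'))
        ≤ 1 * dist s u := by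
    intro s u hsu
    by_cases hs : s ≤ t' <;> by_cases hu : u ≤ t' <;> simp only [hs, hu, if_pos, if_neg, if_true, if_false]
    · exact hx' s u
    · calc dist (x s) (z (u - t')) ≤ dist (x s) (x t') + dist (x t') (z (u - t')) :=
            dist_triangle _ _ _
        _ ≤ dist (x s) (z 0) + dist (z 0) (z (u - t')) := by rw [h]
        _ ≤ 1 * dist s t' + 1 * dist 0 (u - t') :=
            add_le_add (h ▸ hx' s t') (h ▸ hz' 0 (u - t'))
        _ ≤ 1 * dist s u := by
            rw [Real.dist_eq, Real.dist_eq, Real.dist_eq, one_mul, one_mul, one_mul]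
            rw [abs_of_nonpos (by linarith), abs_of_nonpos (by push_neg at hu; linarith),
              abs_of_nonpos (by linarith)]
            ring_nf
            linarith
    · exact absurd (hsu.trans hu) hs
    · have := hz' (s - t') (u - t')
      simpa [Real.dist_eq, sub_sub_sub_cancel_right] using this
  intro s u
  rcases le_total s u with hsu | hus
  · exact key s u hsu
  · rw [dist_comm, dist_comm (s:ℝ)]; exact key u s hus

/-- For the single integrator (1-Lipschitz curves), satisfying `F_{[a₁,b₁]} G_{[a₂,b₂]} μ`
from `x₀` is equivalent to reaching, at some `t' ∈ [a₁, b₁]`, the satisfying set `Q` of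
`G_{[a₂,b₂]} μ`. -/
theorem eventually_always_iff_reach_always_set
    (S : Set (EuclideanSpace ℝ (Fin 2))) (x₀ : EuclideanSpace ℝ (Fin 2))
    (a₁ b₁ a₂ b₂ : ℝ) (ha₁ : 0 ≤ a₁) (hab₁ : a₁ ≤ b₁) (ha₂ : 0 ≤ a₂) (hab₂ : a₂ ≤ b₂) :
    (∃ x : ℝ → EuclideanSpace ℝ (Fin 2), LipschitzWith 1 x ∧ x 0 = x₀ ∧
      ∃ t' ∈ Set.Icc a₁ b₁, ∀ s ∈ Set.Icc (t' + a₂) (t' + b₂), x s ∈ S) ↔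
    (∃ x : ℝ → EuclideanSpace ℝ (Fin 2), LipschitzWith 1 x ∧ x 0 = x₀ ∧
      ∃ t' ∈ Set.Icc a₁ b₁,
        x t' ∈ {y : EuclideanSpace ℝ (Fin 2) | ∃ z : ℝ → EuclideanSpace ℝ (Fin 2),
          LipschitzWith 1 z ∧ z 0 = y ∧ ∀ s ∈ Set.Icc a₂ b₂, z s ∈ S}) := by
  constructor
  · rintro ⟨x, hx, hx0, t', ht', hS⟩
    refine ⟨x, hx, hx0, t', ht', ⟨fun s => x (t' + s), ?_, by simp, ?_⟩⟩
    · have hadd : LipschitzWith 1 (fun s : ℝ => t' + s) :=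
        LipschitzWith.of_dist_le_mul fun a b => by simp [Real.dist_eq]
      simpa [Function.comp_def] using hx.comp hadd
    · intro s hs
      exact hS (t' + s) ⟨by linarith [hs.1], by linarith [hs.2]⟩
  · rintro ⟨x, hx, hx0, t', ht', z, hz, hz0, hS⟩
    refine ⟨fun s => if s ≤ t' then x s else z (s - t'),
      glue_lipschitz x z hx hz t' hz0.symm, ?_, t', ht', ?_⟩
    · simp only [if_pos (ha₁.trans ht'.1), hx0]
    · intro s hs
      by_cases h : s ≤ t'
      · have hst : s = t' := le_antisymm h (by linarith [hs.1])
        show (if s ≤ t' then x s else z (s - t')) ∈ S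
        rw [if_pos h, hst, ← hz0]
        have ha0 : a₂ = 0 := le_antisymm (by linarith [hs.1, hst]) ha₂
        exact hS 0 ⟨by linarith, by linarith⟩
      · simp only [if_neg h]
        exact hS (s - t') ⟨by linarith [hs.1], by linarith [hs.2]⟩
end

section
/- Let E be the Euclidean plane ℝ² with its Euclidean norm, let c, x₀ ∈ E, let ρ ≥ 0 and let 0 ≤ a ≤ b. Then there exists a 1-Lipschitz curve x : ℝ → E with x(0) = x₀ such that ‖x(t) − c‖ ≤ ρ for all t ∈ [a, b], if and only if ‖x₀ − c‖ ≤ a + ρ. -/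
lemma min_lip (k s t : ℝ) : |min k s - min k t| ≤ |s - t| := by
  rcases le_total k s with hs | hs <;> rcases le_total k t with ht | ht <;>
    simp only [min_eq_left, min_eq_right, hs, ht] <;>
    cases abs_cases (s - t) <;> rw [abs_le] <;> constructor <;> linarith

lemma max_lip (k s t : ℝ) : |max k s - max k t| ≤ |s - t| := by
  rcases le_total k s with hs | hs <;> rcases le_total k t with ht | ht <;>
    simp only [max_eq_left, max_eq_right, hs, ht] <;>
    cases abs_cases (s - t) <;> rw [abs_le] <;> constructor <;> linarith

/-- Closed-form satisfying set of `G_{[a,b]} μ` for the single integrator, where `μ` is the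
closed ball `B̄(c, ρ)`: a 1-Lipschitz curve from `x₀` can stay in the ball throughout
`[a, b]` iff `‖x₀ − c‖ ≤ a + ρ`. -/
theorem single_integrator_always_ball
    (c x₀ : EuclideanSpace ℝ (Fin 2)) (ρ : ℝ) (hρ : 0 ≤ ρ)
    (a b : ℝ) (ha : 0 ≤ a) (hab : a ≤ b) :
    (∃ x : ℝ → EuclideanSpace ℝ (Fin 2), LipschitzWith 1 x ∧ x 0 = x₀ ∧
      ∀ t ∈ Set.Icc a b, ‖x t - c‖ ≤ ρ) ↔ ‖x₀ - c‖ ≤ a + ρ := by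
  constructor
  · rintro ⟨x, hx, h0, hball⟩
    have h1 : ‖x 0 - x a‖ ≤ a := by
      have := hx.dist_le_mul 0 a
      simpa [dist_eq_norm, abs_of_nonneg ha] using this
    have h2 : ‖x a - c‖ ≤ ρ := hball a ⟨le_refl a, hab⟩
    calc ‖x₀ - c‖ = ‖(x 0 - x a) + (x a - c)‖ := by rw [h0, ← sub_add_sub_cancel x₀ (x a) c]
      _ ≤ ‖x 0 - x a‖ + ‖x a - c‖ := norm_add_le _ _
      _ ≤ a + ρ := add_le_add h1 h2
  · intro hle
    set d := ‖x₀ - c‖ with hd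
    rcases le_or_gt d ρ with hcase | hcase
    · exact ⟨fun _ => x₀, (LipschitzWith.const x₀).weaken (by norm_num), rfl, fun t _ => hcase⟩
    · have hdpos : 0 < d := lt_of_le_of_lt hρ hcase
      set v : EuclideanSpace ℝ (Fin 2) := (1 / d) • (x₀ - c) with hv
      have hvnorm : ‖v‖ = 1 := by
        rw [hv, norm_smul, norm_div, norm_one, Real.norm_eq_abs,
          abs_of_pos hdpos, ← hd]
        field_simp
      set f : ℝ → ℝ := fun t => min d (max ρ (d - t)) with hf
      refine ⟨fun t => c + (f t) • v, ?_, ?_, ?_⟩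
      · apply LipschitzWith.of_dist_le_mul
        intro s t
        have : dist (c + f s • v) (c + f t • v) = |f s - f t| := by
          rw [dist_eq_norm]
          have : (c + f s • v) - (c + f t • v) = (f s - f t) • v := by
            rw [sub_smul]; abel
          rw [this, norm_smul, hvnorm, mul_one, Real.norm_eq_abs]
        rw [this]
        calc |f s - f t| ≤ |max ρ (d - s) - max ρ (d - t)| := min_lip _ _ _
          _ ≤ |(d - s) - (d - t)| := max_lip _ _ _
          _ = dist s t := by rw [dist_eq_norm, Real.norm_eq_abs, abs_sub_comm]; ring_nf
          _ ≤ 1 * dist s t := by rw [one_mul]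
      · have : f 0 = d := by
          simp only [hf, sub_zero, max_eq_right hcase.le, min_self]
        show c + f 0 • v = x₀
        rw [this, hv, smul_smul]
        field_simp
        rw [one_smul, add_sub_cancel]
      · intro t ht
        have hft : f t = ρ := by
          have h1 : d - t ≤ ρ := by
            have : d ≤ a + ρ := hle
            linarith [ht.1]
          simp only [hf, max_eq_left h1, min_eq_right hcase.le]
        have : (c + f t • v) - c = f t • v := by abel
        rw [this, hft, norm_smul, hvnorm, mul_one, Real.norm_eq_abs,
          abs_of_nonneg hρ]
end

section
/- Let E be the Euclidean plane ℝ² with its Euclidean norm, let c := (−4, −4) ∈ E, and let x₀ ∈ E. Then there exists a 1-Lipschitz curve x : ℝ → E with x(0) = x₀ and some t′ ∈ [0, 15] such that ‖x(s) − c‖ ≤ 1 for all s ∈ [t′ + 2, t′ + 10], if and only if ‖x₀ − c‖ ≤ 18. -/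
/-!
Necessity is the triangle inequality: the curve must be within `r` of `c` at time `t' + a`,
and in that time it has moved at most `t' + a ≤ T + a` away from `x₀`. Conversely, when
`‖x₀ - c‖ ≤ D := r + T + a`, the straight segment from `x₀` to `c`, traversed in time `D`,
is a 1-Lipschitz curve that at every time `s ≥ T + a` is within `D - s ≤ r` of `c`.
-/

open Set AffineMap

variable {E : Type*} [NormedAddCommGroup E] [NormedSpace ℝ E]

theorem one_sub_projIcc_div_mul_le {D : ℝ} (hD : 0 ≤ D) (s : ℝ) :
    (1 - (projIcc (0 : ℝ) 1 zero_le_one (s / D) : ℝ)) * D ≤ max (D - s) 0 := by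
  rcases hD.eq_or_lt with rfl | hpos
  · simp
  have hθ : min 1 (s / D) ≤ projIcc (0 : ℝ) 1 zero_le_one (s / D) := by
    simp only [coe_projIcc, le_max_right]
  rcases le_total 1 (s / D) with h | h
  · rw [min_eq_left h] at hθ
    nlinarith [le_max_right (D - s) 0]
  · rw [min_eq_right h] at hθ
    have : s / D * D = s := div_mul_cancel₀ s hpos.ne'
    nlinarith [le_max_left (D - s) 0]

noncomputable def approachCurve (x₀ c : E) (D t : ℝ) : E :=
  lineMap x₀ c (projIcc (0 : ℝ) 1 zero_le_one (t / D) : ℝ)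

section approachCurve

variable {x₀ c : E} {D : ℝ}

@[simp]
theorem approachCurve_zero : approachCurve x₀ c D 0 = x₀ := by
  simp [approachCurve]

theorem lipschitzWith_approachCurve (hD : ‖x₀ - c‖ ≤ D) :
    LipschitzWith 1 (approachCurve x₀ c D) := by
  refine LipschitzWith.of_dist_le_mul fun s t => ?_
  rw [approachCurve, approachCurve, dist_lineMap_lineMap, dist_eq_norm x₀, NNReal.coe_one,
    one_mul]
  calc dist _ _ * ‖x₀ - c‖ ≤ |s / D - t / D| * D :=
        mul_le_mul (abs_projIcc_sub_projIcc zero_le_one) hD (norm_nonneg _) (abs_nonneg _)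
    _ ≤ dist s t := by
        rcases (norm_nonneg _ |>.trans hD).eq_or_lt with rfl | hpos
        · simp
        · rw [← sub_div, abs_div, abs_of_pos hpos, div_mul_cancel₀ _ hpos.ne', Real.dist_eq]

theorem norm_approachCurve_sub_le (hD : ‖x₀ - c‖ ≤ D) (s : ℝ) :
    ‖approachCurve x₀ c D s - c‖ ≤ max (D - s) 0 := by
  have hθ1 : (projIcc (0 : ℝ) 1 zero_le_one (s / D) : ℝ) ≤ 1 := (projIcc _ _ _ _).2.2
  rw [approachCurve, ← dist_eq_norm, dist_lineMap_right, Real.norm_of_nonneg (by linarith),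
    dist_eq_norm]
  exact (mul_le_mul_of_nonneg_left hD (by linarith)).trans
    (one_sub_projIcc_div_mul_le (norm_nonneg _ |>.trans hD) s)

end approachCurve

theorem exists_lipschitzWith_one_eventually_always_iff {r T a b : ℝ} (hr : 0 ≤ r) (hT : 0 ≤ T)
    (ha : 0 ≤ a) (hab : a ≤ b) (c x₀ : E) :
    (∃ x : ℝ → E, LipschitzWith 1 x ∧ x 0 = x₀ ∧
      ∃ t' ∈ Icc (0 : ℝ) T, ∀ s ∈ Icc (t' + a) (t' + b), ‖x s - c‖ ≤ r) ↔
    ‖x₀ - c‖ ≤ r + T + a := by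
  constructor
  · rintro ⟨x, hx, rfl, t', ⟨ht'0, ht'T⟩, hsat⟩
    have hreach : ‖x (t' + a) - c‖ ≤ r := hsat _ ⟨le_rfl, by linarith⟩
    have hmove : dist (x 0) (x (t' + a)) ≤ t' + a := by
      simpa [dist_comm (0 : ℝ), Real.dist_eq, abs_of_nonneg (add_nonneg ht'0 ha)]
        using hx.dist_le_mul 0 (t' + a)
    calc ‖x 0 - c‖ ≤ dist (x 0) (x (t' + a)) + ‖x (t' + a) - c‖ := by
          simpa only [dist_eq_norm] using dist_triangle (x 0) (x (t' + a)) c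
      _ ≤ r + T + a := by linarith
  · intro hD
    refine ⟨approachCurve x₀ c (r + T + a), lipschitzWith_approachCurve hD, approachCurve_zero,
      T, ⟨hT, le_rfl⟩, fun s hs => ?_⟩
    exact (norm_approachCurve_sub_le hD s).trans (max_le (by linarith [hs.1]) hr)

theorem single_integrator_node_X1_general
    (c x₀ : EuclideanSpace ℝ (Fin 2)) :
    (∃ x : ℝ → EuclideanSpace ℝ (Fin 2), LipschitzWith 1 x ∧ x 0 = x₀ ∧
      ∃ t' ∈ Set.Icc (0:ℝ) 15, ∀ s ∈ Set.Icc (t' + 2) (t' + 10), ‖x s - c‖ ≤ 1) ↔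
    ‖x₀ - c‖ ≤ 18 := by
  rw [exists_lipschitzWith_one_eventually_always_iff zero_le_one (by norm_num) (by norm_num)
    (by norm_num)]
  norm_num

/-- The satisfying set of `F_{[0,15]} G_{[2,10]} μ₁` for the single integrator, with `μ₁`
the closed unit ball around `c = (−4, −4)`, is the closed ball of radius 18 around `c`:
the set node `𝕏₁` of the case study. -/
theorem single_integrator_node_X1
    (c x₀ : EuclideanSpace ℝ (Fin 2)) (hc0 : c 0 = -4) (hc1 : c 1 = -4) :
    (∃ x : ℝ → EuclideanSpace ℝ (Fin 2), LipschitzWith 1 x ∧ x 0 = x₀ ∧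
      ∃ t' ∈ Set.Icc (0:ℝ) 15, ∀ s ∈ Set.Icc (t' + 2) (t' + 10), ‖x s - c‖ ≤ 1) ↔
    ‖x₀ - c‖ ≤ 18 :=
  single_integrator_node_X1_general c x₀
end

section
/- Let E be the Euclidean plane ℝ² with its Euclidean norm, let c₂ := (4, 0) ∈ E, c₃ := (1, −4) ∈ E, and let x₀ ∈ E. Then there exists a 1-Lipschitz curve x : ℝ → E with x(0) = x₀ and some t′ ∈ [0, 15] such that ‖x(s) − c₂‖ ≤ 4 for all s ∈ [t′, t′ + 10] and ‖x(s′) − c₃‖ ≤ 2 for some s′ ∈ [t′ + 5, t′ + 10], if and only if ‖x₀ − c₂‖ ≤ 19. -/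
/-! The ball of radius `4` around `c₂` must be reached by time `15`, which a unit-speed
curve can do only from within distance `19` of `c₂`. Conversely, from any such `x₀` run
straight to `c₂` and then on to the point `p` three fifths of the way from `c₂` to `c₃`
(`‖c₃ - c₂‖ = 5`, so `p` lies in both balls). Starting the window when the curve enters the
ball around `c₂`, it stays within that ball and is at `p` by time `t' + 7`. -/

/-- The arc length covered by time `t` on a unit-speed move of length `r` begun at time `0`. -/
def ramp (r t : ℝ) : ℝ := max 0 (min r t)

section Ramp

variable {r ρ t : ℝ}

lemma monotone_ramp (r : ℝ) : Monotone (ramp r) :=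
  fun _ _ h => max_le_max le_rfl (min_le_min le_rfl h)

lemma lipschitzWith_ramp (r : ℝ) : LipschitzWith 1 (ramp r) :=
  (LipschitzWith.id.const_min r).const_max 0

lemma ramp_of_nonpos (ht : t ≤ 0) : ramp r t = 0 :=
  max_eq_left ((min_le_right r t).trans ht)

lemma ramp_of_le (hr : 0 ≤ r) (h : r ≤ t) : ramp r t = r := by
  rw [ramp, min_eq_left h, max_eq_right hr]

lemma ramp_le (hr : 0 ≤ r) : ramp r t ≤ r :=
  max_le hr (min_le_left r t)

lemma ramp_add_ramp_sub (hr : 0 ≤ r) (hρ : 0 ≤ ρ) :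
    ramp r t + ramp ρ (t - r) = ramp (r + ρ) t := by
  simp only [ramp, min_def, max_def]
  split_ifs <;> linarith

end Ramp

section Path

variable {E : Type*} [NormedAddCommGroup E] [NormedSpace ℝ E]

lemma exists_norm_le_one_smul_eq (w : E) : ∃ u : E, ‖u‖ ≤ 1 ∧ ‖w‖ • u = w := by
  refine ⟨‖w‖⁻¹ • w, ?_, ?_⟩
  · rw [norm_smul, norm_inv, norm_norm]
    exact inv_mul_le_one_of_le₀ le_rfl (norm_nonneg w)
  · rcases eq_or_ne w 0 with rfl | hw
    · simp
    · rw [smul_inv_smul₀ (norm_ne_zero_iff.mpr hw)]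

lemma norm_smul_le_of_norm_le_one {c : ℝ} (hc : 0 ≤ c) {u : E} (hu : ‖u‖ ≤ 1) :
    ‖c • u‖ ≤ c := by
  rw [norm_smul, Real.norm_of_nonneg hc]
  exact mul_le_of_le_one_right hc hu

/-- By monotonicity, the displacement between times `s ≤ t` is at most the progress
`(f + g) t - (f + g) s`. -/
lemma lipschitzWith_one_add_smul_add_smul {f g : ℝ → ℝ} (hf : Monotone f) (hg : Monotone g)
    (hfg : LipschitzWith 1 (f + g)) (a : E) {u v : E} (hu : ‖u‖ ≤ 1) (hv : ‖v‖ ≤ 1) :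
    LipschitzWith 1 fun t => a + f t • u + g t • v := by
  refine LipschitzWith.of_dist_le_mul fun s t => ?_
  rw [NNReal.coe_one, one_mul]
  wlog hst : s ≤ t generalizing s t
  · simpa only [dist_comm] using this t s (le_of_not_ge hst)
  have htotal : f t + g t - (f s + g s) ≤ t - s := by
    have := hfg.dist_le_mul t s
    rw [NNReal.coe_one, one_mul, Real.dist_eq, Real.dist_eq, Pi.add_apply, Pi.add_apply] at this
    exact (le_abs_self _).trans (this.trans (abs_of_nonneg (sub_nonneg.mpr hst)).le)
  calc dist (a + f s • u + g s • v) (a + f t • u + g t • v)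
      = ‖(f t - f s) • u + (g t - g s) • v‖ := by
        rw [dist_comm, dist_eq_norm, sub_smul, sub_smul]; congr 1; abel
    _ ≤ (f t - f s) + (g t - g s) :=
        (norm_add_le _ _).trans (add_le_add
          (norm_smul_le_of_norm_le_one (sub_nonneg.mpr (hf hst)) hu)
          (norm_smul_le_of_norm_le_one (sub_nonneg.mpr (hg hst)) hv))
    _ ≤ dist s t := by
        rw [Real.dist_eq, abs_of_nonpos (sub_nonpos.mpr hst)]; linarith

theorem exists_lipschitzWith_one_path_via (a b c : E) :
    ∃ x : ℝ → E, LipschitzWith 1 x ∧ x 0 = a ∧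
      (∀ t, dist (x t) b ≤ max (dist a b - t) (dist b c)) ∧
      ∀ t, dist a b + dist b c ≤ t → x t = c := by
  set r := dist a b
  set ρ := dist b c
  have hr : 0 ≤ r := dist_nonneg
  have hρ : 0 ≤ ρ := dist_nonneg
  obtain ⟨u, hu, hru⟩ := exists_norm_le_one_smul_eq (b - a)
  obtain ⟨v, hv, hρv⟩ := exists_norm_le_one_smul_eq (c - b)
  rw [← dist_eq_norm, dist_comm] at hru hρv
  have hf_add_g : (ramp r + fun t => ramp ρ (t - r)) = ramp (r + ρ) :=
    funext fun t => ramp_add_ramp_sub hr hρ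
  refine ⟨fun t => a + ramp r t • u + ramp ρ (t - r) • v,
    lipschitzWith_one_add_smul_add_smul (monotone_ramp r)
      ((monotone_ramp ρ).comp fun _ _ h => sub_le_sub_right h r)
      (hf_add_g ▸ lipschitzWith_ramp _) a hu hv, ?_, fun t => ?_, fun t ht => ?_⟩
  · simp [ramp_of_nonpos le_rfl, ramp_of_nonpos (neg_nonpos.mpr hr)]
  · have hb : b = a + r • u := by rw [hru]; abel
    rw [hb, dist_eq_norm]
    calc ‖a + ramp r t • u + ramp ρ (t - r) • v - (a + r • u)‖
        = ‖ramp ρ (t - r) • v - (r - ramp r t) • u‖ := by rw [sub_smul]; congr 1; abel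
      _ ≤ ramp ρ (t - r) + (r - ramp r t) :=
        (norm_sub_le _ _).trans (add_le_add (norm_smul_le_of_norm_le_one (le_max_left _ _) hv)
          (norm_smul_le_of_norm_le_one (sub_nonneg.mpr (ramp_le hr)) hu))
      _ ≤ max (r - t) ρ := by
        rcases le_total t r with htr | hrt
        · rw [ramp_of_nonpos (sub_nonpos.mpr htr)]
          have htravelled : t ≤ ramp r t := (min_eq_right htr).ge.trans (le_max_right _ _)
          exact (by linarith : 0 + (r - ramp r t) ≤ r - t).trans (le_max_left _ _)
        · rw [ramp_of_le hr hrt, sub_self, add_zero]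
          exact (ramp_le hρ).trans (le_max_right _ _)
  · show a + ramp r t • u + ramp ρ (t - r) • v = c
    rw [ramp_of_le hr (le_of_add_le_of_nonneg_left ht hρ),
      ramp_of_le hρ (by linarith), hru, hρv]
    abel

end Path

/-- The satisfying set of `F_{[0,15]}(G_{[0,10]} μ₂ ∧ F_{[5,10]} μ₃)` for the single
integrator, with `μ₂` the closed ball of radius 4 around `c₂ = (4, 0)` and `μ₃` the closed
ball of radius 2 around `c₃ = (1, −4)`, is the closed ball of radius 19 around `c₂`:
the set node `𝕏₂` of the case study. -/
theorem single_integrator_node_X2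
    (c₂ c₃ x₀ : EuclideanSpace ℝ (Fin 2))
    (hc₂0 : c₂ 0 = 4) (hc₂1 : c₂ 1 = 0) (hc₃0 : c₃ 0 = 1) (hc₃1 : c₃ 1 = -4) :
    (∃ x : ℝ → EuclideanSpace ℝ (Fin 2), LipschitzWith 1 x ∧ x 0 = x₀ ∧
      ∃ t' ∈ Set.Icc (0:ℝ) 15,
        (∀ s ∈ Set.Icc t' (t' + 10), ‖x s - c₂‖ ≤ 4) ∧
        (∃ s' ∈ Set.Icc (t' + 5) (t' + 10), ‖x s' - c₃‖ ≤ 2)) ↔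
    ‖x₀ - c₂‖ ≤ 19 := by
  simp only [← dist_eq_norm]
  constructor
  · rintro ⟨x, hx, rfl, t', ⟨ht'0, ht'15⟩, hball, -⟩
    calc dist (x 0) c₂ ≤ dist (x 0) (x t') + dist (x t') c₂ := dist_triangle _ _ _
      _ ≤ t' + 4 := by
        refine add_le_add ?_ (hball t' ⟨le_rfl, by linarith⟩)
        simpa [Real.dist_eq, abs_of_nonneg ht'0] using hx.dist_le_mul 0 t'
      _ ≤ 19 := by linarith
  · intro hx₀
    have hc₂c₃ : dist c₂ c₃ = 5 := by
      rw [EuclideanSpace.dist_eq, Fin.sum_univ_two, hc₂0, hc₂1, hc₃0, hc₃1, Real.dist_eq,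
        Real.dist_eq, show |(4:ℝ) - 1| ^ 2 + |0 - -4| ^ 2 = 5 ^ 2 by norm_num,
        Real.sqrt_sq (by norm_num)]
    set p := AffineMap.lineMap c₂ c₃ (3 / 5 : ℝ)
    have hp₂ : dist c₂ p = 3 := by
      rw [dist_comm, dist_lineMap_left, hc₂c₃]; norm_num
    have hp₃ : dist p c₃ = 2 := by
      rw [dist_lineMap_right, hc₂c₃]; norm_num
    obtain ⟨x, hx, hx0, hnear, hend⟩ := exists_lipschitzWith_one_path_via x₀ c₂ p
    rw [hp₂] at hnear hend
    set d := dist x₀ c₂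
    set t' := max (d - 4) 0
    have ht' : d - 4 ≤ t' := le_max_left _ _
    refine ⟨x, hx, hx0, t', ⟨le_max_right _ _, max_le (by linarith) (by norm_num)⟩,
      fun s hs => (hnear s).trans (max_le (by linarith [hs.1]) (by norm_num)),
      max (d + 3) (t' + 5), ⟨le_max_right _ _, max_le (by linarith) (by linarith)⟩, ?_⟩
    rw [hend _ (le_max_left _ _), hp₃]
end

section
/- Let E be the Euclidean plane ℝ² with its Euclidean inner product ⟪·,·⟫ and norm, let c ∈ E, and let r, T be reals with 0 ≤ T and T + 2 ≤ r. Then for every t ∈ [0, T] and every x ∈ E with (r − t)² − ‖x − c‖² ≥ 0, there exists u ∈ E with ‖u‖ ≤ 1 and ⟪−2(x − c), u⟫ − 2(r − t) ≥ −((r − t)² − ‖x − c‖²). -/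
open scoped RealInnerProductSpace

/-- The shrinking-ball barrier `𝔟(x, t) = (r − t)² − ‖x − c‖²` satisfies the CBF condition
for the single integrator with input bound `‖u‖ ≤ 1` and class-K function `α = id`,
on its zero-superlevel set and time domain `[0, T]`, provided `T + 2 ≤ r`. -/
theorem shrinking_ball_barrier_is_CBF
    (c : EuclideanSpace ℝ (Fin 2)) (r T : ℝ) (hT : 0 ≤ T) (hTr : T + 2 ≤ r) :
    ∀ t ∈ Set.Icc (0:ℝ) T, ∀ x : EuclideanSpace ℝ (Fin 2),
      (r - t) ^ 2 - ‖x - c‖ ^ 2 ≥ 0 →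
      ∃ u : EuclideanSpace ℝ (Fin 2), ‖u‖ ≤ 1 ∧
        ⟪(-2 : ℝ) • (x - c), u⟫ - 2 * (r - t) ≥ -((r - t) ^ 2 - ‖x - c‖ ^ 2) := by
  intro t ht x hx
  set a := ‖x - c‖ with ha
  have ha0 : 0 ≤ a := norm_nonneg _
  have hs : 2 ≤ r - t := by linarith [ht.2]
  have has : a ≤ r - t := by nlinarith
  by_cases hxc : x = c
  · refine ⟨0, by simp, ?_⟩
    have : a = 0 := by simp [ha, hxc]
    rw [inner_zero_right]
    nlinarith
  · have hapos : 0 < a := by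
      simpa [ha, sub_eq_zero] using norm_pos_iff.mpr (sub_ne_zero.mpr hxc)
    refine ⟨(-(a⁻¹)) • (x - c), ?_, ?_⟩
    · rw [norm_smul]
      rw [norm_neg, Real.norm_eq_abs, abs_inv, abs_of_pos hapos, ← ha]
      exact le_of_eq (inv_mul_cancel₀ hapos.ne')
    · rw [inner_smul_left, inner_smul_right, real_inner_self_eq_norm_sq, ← ha]
      simp only [map_neg, map_ofNat, RCLike.star_def, starRingEnd_apply, star_trivial]
      have h2 : (-2 : ℝ) * (-a⁻¹ * a ^ 2) = 2 * a := by field_simp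
      rw [h2]
      nlinarith
end
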